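/- arXiv:math/0301188 — 3 statements merged into one kernel-verified Lean document; each statement's English description precedes it below -/
import Mathlib

section
/- Flips occur exactly at local extrema of the height function: for a tiling T of a domain D and an interior vertex v, a downward flip can be performed on T at v if and only if v is a local maximum of h_T, and an upward flip can be performed on T at v if and only if v is a local minimum of h_T. -/
namespace DominoTiling

/-!
Domino tilings of simply connected domains in the square lattice,
following Desreux–Rémila, "An optimal algorithm to generate tilings".
-/

abbrev Cell : Type := ℤ × ℤ
abbrev Vertex : Type := ℤ × ℤ

/-- The closed unit square of the cell with lower-left corner `c`. -/
def cellSquare (c : Cell) : Set (ℝ × ℝ) :=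
  Set.Icc ((c.1 : ℝ), (c.2 : ℝ)) ((c.1 : ℝ) + 1, (c.2 : ℝ) + 1)

/-- The closed union of the cells of `D`. -/
def regionOf (D : Set Cell) : Set (ℝ × ℝ) :=
  ⋃ c ∈ D, cellSquare c

/-- A domain: a finite nonempty set of cells whose union is a simply connected
subset of the plane. -/
structure IsDomain (D : Set Cell) : Prop where
  finite : D.Finite
  nonempty : D.Nonempty
  simplyConnected : SimplyConnectedSpace (regionOf D)

def embedV (v : Vertex) : ℝ × ℝ := ((v.1 : ℝ), (v.2 : ℝ))

/-- The four corners of a cell. -/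
def cornersOf (c : Cell) : Set Vertex :=
  {c, (c.1 + 1, c.2), (c.1, c.2 + 1), (c.1 + 1, c.2 + 1)}

/-- A vertex of `D`: a point of `ℤ²` lying in the closed union of `D`. -/
def IsVertexOf (D : Set Cell) (v : Vertex) : Prop :=
  embedV v ∈ regionOf D

/-- A boundary vertex of `D`: a vertex on the topological boundary of the union. -/
def IsBoundaryVertexOf (D : Set Cell) (v : Vertex) : Prop :=
  IsVertexOf D v ∧ embedV v ∈ frontier (regionOf D)

/-- An interior vertex of `D`: a vertex not on the topological boundary. -/
def IsInteriorVertexOf (D : Set Cell) (v : Vertex) : Prop :=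
  IsVertexOf D v ∧ embedV v ∉ frontier (regionOf D)

/-- Directed lattice edges, directed clockwise around black cells (cells whose
coordinate sum is even), equivalently counterclockwise around white cells:
vertical edges leave vertices of even coordinate sum, horizontal edges leave
vertices of odd coordinate sum. -/
def IsDirEdge (v w : Vertex) : Prop :=
  (Even (v.1 + v.2) ∧ (w = (v.1, v.2 + 1) ∨ w = (v.1, v.2 - 1))) ∨
  (¬ Even (v.1 + v.2) ∧ (w = (v.1 + 1, v.2) ∨ w = (v.1 - 1, v.2)))

/-- A directed lattice edge lying in the closed union of `D` (equivalently, its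
two endpoints are corners of a common cell of `D`). -/
def EdgeInDomain (D : Set Cell) (v w : Vertex) : Prop :=
  IsDirEdge v w ∧ ∃ c ∈ D, v ∈ cornersOf c ∧ w ∈ cornersOf c

/-- A domino: a union of two cells sharing an edge. -/
def IsDomino (d : Set Cell) : Prop :=
  ∃ a b : ℤ, d = {(a, b), (a + 1, b)} ∨ d = {(a, b), (a, b + 1)}

/-- The central axis of a domino, as an unordered pair `{v, w}` of vertices:
the common side of its two cells. -/
def IsCentralAxis (d : Set Cell) (v w : Vertex) : Prop :=
  ∃ a b : ℤ,
    (d = {(a, b), (a + 1, b)} ∧ ({v, w} : Set Vertex) = {(a + 1, b), (a + 1, b + 1)}) ∨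
    (d = {(a, b), (a, b + 1)} ∧ ({v, w} : Set Vertex) = {(a, b + 1), (a + 1, b + 1)})

/-- A tiling of `D`: a set of dominoes that partitions `D`. -/
def IsTiling (D : Set Cell) (T : Set (Set Cell)) : Prop :=
  (∀ d ∈ T, IsDomino d) ∧ T.PairwiseDisjoint id ∧ ⋃₀ T = D

/-- `h` is a height function for the tiling `T` of `D` with origin `O`:
`h O = 0`, and along every directed edge `(v, w)` lying in the closed union of
`D`, `h w = h v - 3` if the edge is the central axis of a domino of `T`, and
`h w = h v + 1` otherwise. -/
def IsHeightFunction (D : Set Cell) (O : Vertex) (T : Set (Set Cell))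
    (h : Vertex → ℤ) : Prop :=
  h O = 0 ∧
  ∀ v w : Vertex, EdgeInDomain D v w →
    ((∃ d ∈ T, IsCentralAxis d v w) → h w = h v - 3) ∧
    (¬ (∃ d ∈ T, IsCentralAxis d v w) → h w = h v + 1)

/-- The order on tilings: `T ≤ T'` iff `h_T ≤ h_{T'}` pointwise on the
vertices of `D`. -/
def TilingLE (D : Set Cell) (O : Vertex) (T T' : Set (Set Cell)) : Prop :=
  ∀ h h' : Vertex → ℤ, IsHeightFunction D O T h → IsHeightFunction D O T' h' →
    ∀ v : Vertex, IsVertexOf D v → h v ≤ h' v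

/-- The two horizontal dominoes filling the 2×2 square of cells centered at
the vertex `v`. -/
def hDominoes (v : Vertex) : Set (Set Cell) :=
  { {(v.1 - 1, v.2 - 1), (v.1, v.2 - 1)}, {(v.1 - 1, v.2), (v.1, v.2)} }

/-- The two vertical dominoes filling the 2×2 square of cells centered at
the vertex `v`. -/
def vDominoes (v : Vertex) : Set (Set Cell) :=
  { {(v.1 - 1, v.2 - 1), (v.1 - 1, v.2)}, {(v.1, v.2 - 1), (v.1, v.2)} }

/-- Upward flip at the interior vertex `v`: the two dominoes of `T` whose
central axes are the directed edges ending at `v` are replaced by the two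
other dominoes covering the same 2×2 square, whose central axes are the
directed edges starting at `v`. -/
def UpwardFlip (D : Set Cell) (v : Vertex) (T T' : Set (Set Cell)) : Prop :=
  IsInteriorVertexOf D v ∧
  ((Even (v.1 + v.2) ∧ vDominoes v ⊆ T ∧ T' = (T \ vDominoes v) ∪ hDominoes v) ∨
   (¬ Even (v.1 + v.2) ∧ hDominoes v ⊆ T ∧ T' = (T \ hDominoes v) ∪ vDominoes v))

/-- A flip is an upward flip or a downward flip (the reverse operation). -/
def Flip (D : Set Cell) (v : Vertex) (T T' : Set (Set Cell)) : Prop :=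
  UpwardFlip D v T T' ∨ UpwardFlip D v T' T

/-- `w` is one of the four lattice neighbours of `v`. -/
def Adjacent (v w : Vertex) : Prop :=
  w = (v.1 + 1, v.2) ∨ w = (v.1 - 1, v.2) ∨ w = (v.1, v.2 + 1) ∨ w = (v.1, v.2 - 1)

/-- `v` is a local maximum of `h`: an interior vertex whose height exceeds the
heights of its four neighbours. -/
def IsLocalMax (D : Set Cell) (h : Vertex → ℤ) (v : Vertex) : Prop :=
  IsInteriorVertexOf D v ∧ ∀ w : Vertex, Adjacent v w → h w < h v

/-- `v` is a local minimum of `h`: an interior vertex whose height is below the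
heights of its four neighbours. -/
def IsLocalMin (D : Set Cell) (h : Vertex → ℤ) (v : Vertex) : Prop :=
  IsInteriorVertexOf D v ∧ ∀ w : Vertex, Adjacent v w → h v < h w


lemma axis_comm {d : Set Cell} {v w : Vertex} :
    IsCentralAxis d v w ↔ IsCentralAxis d w v := by
  unfold IsCentralAxis
  rw [Set.pair_comm v w]

lemma axisV (d : Set Cell) (x y : ℤ) :
    IsCentralAxis d (x, y) (x, y + 1) ↔ d = {(x - 1, y), (x, y)} := by
  constructor
  · rintro ⟨a, b, ⟨hd, hp⟩ | ⟨hd, hp⟩⟩ <;>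
      rw [Set.pair_eq_pair_iff] at hp <;>
      obtain ⟨h1, h2⟩ | ⟨h1, h2⟩ := hp <;>
      simp only [Prod.mk.injEq] at h1 h2
    · obtain ⟨rfl, rfl⟩ : a = x - 1 ∧ b = y := by omega
      rw [hd]; norm_num
    · omega
    · omega
    · omega
  · rintro rfl
    refine ⟨x - 1, y, Or.inl ⟨by norm_num, by norm_num⟩⟩

lemma axisH (d : Set Cell) (x y : ℤ) :
    IsCentralAxis d (x, y) (x + 1, y) ↔ d = {(x, y - 1), (x, y)} := by
  constructor
  · rintro ⟨a, b, ⟨hd, hp⟩ | ⟨hd, hp⟩⟩ <;>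
      rw [Set.pair_eq_pair_iff] at hp <;>
      obtain ⟨h1, h2⟩ | ⟨h1, h2⟩ := hp <;>
      simp only [Prod.mk.injEq] at h1 h2
    · omega
    · omega
    · obtain ⟨rfl, rfl⟩ : a = x ∧ b = y - 1 := by omega
      rw [hd]; norm_num
    · omega
  · rintro rfl
    refine ⟨x, y - 1, Or.inr ⟨by norm_num, by norm_num⟩⟩
section AxE
variable {T : Set (Set Cell)} (x y : ℤ)

lemma axE_up : (∃ d ∈ T, IsCentralAxis d (x, y) (x, y + 1)) ↔
    ({(x - 1, y), (x, y)} : Set Cell) ∈ T := by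
  constructor
  · rintro ⟨d, hd, hax⟩
    rw [axisV] at hax; rwa [hax] at hd
  · intro hmem
    exact ⟨_, hmem, (axisV _ x y).mpr rfl⟩

lemma axE_down : (∃ d ∈ T, IsCentralAxis d (x, y) (x, y - 1)) ↔
    ({(x - 1, y - 1), (x, y - 1)} : Set Cell) ∈ T := by
  constructor
  · rintro ⟨d, hd, hax⟩
    rw [axis_comm] at hax
    have h1 : IsCentralAxis d (x, y - 1) (x, (y - 1) + 1) := by
      rwa [show y - 1 + 1 = y from by ring]
    rw [axisV] at h1; rwa [h1] at hd
  · intro hmem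
    refine ⟨_, hmem, axis_comm.mpr ?_⟩
    have := (axisV ({(x - 1, y - 1), (x, y - 1)} : Set Cell) x (y - 1)).mpr rfl
    rwa [show y - 1 + 1 = y from by ring] at this

lemma axE_up_in : (∃ d ∈ T, IsCentralAxis d (x, y + 1) (x, y)) ↔
    ({(x - 1, y), (x, y)} : Set Cell) ∈ T := by
  rw [show (∃ d ∈ T, IsCentralAxis d (x, y + 1) (x, y)) ↔
      (∃ d ∈ T, IsCentralAxis d (x, y) (x, y + 1)) from by
    constructor <;> rintro ⟨d, hd, hax⟩ <;> exact ⟨d, hd, axis_comm.mp hax⟩]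
  exact axE_up x y

lemma axE_down_in : (∃ d ∈ T, IsCentralAxis d (x, y - 1) (x, y)) ↔
    ({(x - 1, y - 1), (x, y - 1)} : Set Cell) ∈ T := by
  rw [show (∃ d ∈ T, IsCentralAxis d (x, y - 1) (x, y)) ↔
      (∃ d ∈ T, IsCentralAxis d (x, y) (x, y - 1)) from by
    constructor <;> rintro ⟨d, hd, hax⟩ <;> exact ⟨d, hd, axis_comm.mp hax⟩]
  exact axE_down x y

lemma axE_right : (∃ d ∈ T, IsCentralAxis d (x, y) (x + 1, y)) ↔
    ({(x, y - 1), (x, y)} : Set Cell) ∈ T := by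
  constructor
  · rintro ⟨d, hd, hax⟩
    rw [axisH] at hax; rwa [hax] at hd
  · intro hmem
    exact ⟨_, hmem, (axisH _ x y).mpr rfl⟩

lemma axE_left : (∃ d ∈ T, IsCentralAxis d (x, y) (x - 1, y)) ↔
    ({(x - 1, y - 1), (x - 1, y)} : Set Cell) ∈ T := by
  constructor
  · rintro ⟨d, hd, hax⟩
    rw [axis_comm] at hax
    have h1 : IsCentralAxis d (x - 1, y) ((x - 1) + 1, y) := by
      rwa [show x - 1 + 1 = x from by ring]
    rw [axisH] at h1; rwa [h1] at hd
  · intro hmem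
    refine ⟨_, hmem, axis_comm.mpr ?_⟩
    have := (axisH ({(x - 1, y - 1), (x - 1, y)} : Set Cell) (x - 1) y).mpr rfl
    rwa [show x - 1 + 1 = x from by ring] at this

lemma axE_right_in : (∃ d ∈ T, IsCentralAxis d (x + 1, y) (x, y)) ↔
    ({(x, y - 1), (x, y)} : Set Cell) ∈ T := by
  rw [show (∃ d ∈ T, IsCentralAxis d (x + 1, y) (x, y)) ↔
      (∃ d ∈ T, IsCentralAxis d (x, y) (x + 1, y)) from by
    constructor <;> rintro ⟨d, hd, hax⟩ <;> exact ⟨d, hd, axis_comm.mp hax⟩]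
  exact axE_right x y

lemma axE_left_in : (∃ d ∈ T, IsCentralAxis d (x - 1, y) (x, y)) ↔
    ({(x - 1, y - 1), (x - 1, y)} : Set Cell) ∈ T := by
  rw [show (∃ d ∈ T, IsCentralAxis d (x - 1, y) (x, y)) ↔
      (∃ d ∈ T, IsCentralAxis d (x, y) (x - 1, y)) from by
    constructor <;> rintro ⟨d, hd, hax⟩ <;> exact ⟨d, hd, axis_comm.mp hax⟩]
  exact axE_left x y

end AxE

lemma not_both {D : Set Cell} {T : Set (Set Cell)} (hT : IsTiling D T)
    {d1 d2 : Set Cell} (hd1 : d1 ∈ T) (hd2 : d2 ∈ T) {c : Cell}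
    (h1 : c ∈ d1) (h2 : c ∈ d2) : d1 = d2 := by
  by_contra hne
  exact (Set.disjoint_left.mp (hT.2.1 hd1 hd2 hne) h1) h2
lemma interior_cells {D : Set Cell} {x y : ℤ} (hv : IsInteriorVertexOf D (x, y)) :
    ((x - 1, y - 1) : Cell) ∈ D ∧ ((x, y - 1) : Cell) ∈ D ∧
    ((x - 1, y) : Cell) ∈ D ∧ ((x, y) : Cell) ∈ D := by
  have hmem : embedV (x, y) ∈ regionOf D := hv.1
  have hint : embedV (x, y) ∈ interior (regionOf D) := by
    by_contra hni
    exact hv.2 ⟨subset_closure hmem, hni⟩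
  obtain ⟨ε, hε, hball⟩ := Metric.mem_nhds_iff.mp (mem_interior_iff_mem_nhds.mp hint)
  set δ : ℝ := min (ε / 2) (1 / 2) with hδdef
  have hδpos : 0 < δ := lt_min (by linarith) (by norm_num)
  have hδhalf : δ ≤ 1 / 2 := min_le_right _ _
  have hδε : δ < ε := lt_of_le_of_lt (min_le_left _ _) (by linarith)
  have habs : |δ| = δ := abs_of_pos hδpos
  have habsn : |(-δ)| = δ := by rw [abs_neg]; exact habs
  have key : ∀ (a b : ℤ) (sx sy : ℝ), |sx| = δ → |sy| = δ →
      (a : ℝ) < (x : ℝ) + sx → (x : ℝ) + sx < (a : ℝ) + 1 →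
      (b : ℝ) < (y : ℝ) + sy → (y : ℝ) + sy < (b : ℝ) + 1 → ((a, b) : Cell) ∈ D := by
    intro a b sx sy hsx hsy ha1 ha2 hb1 hb2
    have hp : (((x : ℝ) + sx, (y : ℝ) + sy) : ℝ × ℝ) ∈ regionOf D := by
      apply hball
      rw [Metric.mem_ball, Prod.dist_eq]
      simp only [embedV]
      rw [Real.dist_eq, Real.dist_eq,
        show (x : ℝ) + sx - (x : ℝ) = sx from by ring,
        show (y : ℝ) + sy - (y : ℝ) = sy from by ring, hsx, hsy, max_self]
      exact hδε
    rw [regionOf, Set.mem_iUnion₂] at hp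
    obtain ⟨c, hcD, hpc⟩ := hp
    rw [cellSquare, Set.mem_Icc, Prod.mk_le_mk, Prod.mk_le_mk] at hpc
    obtain ⟨⟨hc1, hc2⟩, hc3, hc4⟩ := hpc
    have hca : c.1 = a := by
      have h1 : (c.1 : ℝ) < ((a + 1 : ℤ) : ℝ) := by push_cast; linarith
      have h2 : ((a : ℤ) : ℝ) < ((c.1 + 1 : ℤ) : ℝ) := by push_cast; linarith
      have h1' := Int.cast_lt.mp h1
      have h2' := Int.cast_lt.mp h2
      omega
    have hcb : c.2 = b := by
      have h1 : (c.2 : ℝ) < ((b + 1 : ℤ) : ℝ) := by push_cast; linarith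
      have h2 : ((b : ℤ) : ℝ) < ((c.2 + 1 : ℤ) : ℝ) := by push_cast; linarith
      have h1' := Int.cast_lt.mp h1
      have h2' := Int.cast_lt.mp h2
      omega
    have hc : c = (a, b) := by rw [← hca, ← hcb]
    rwa [hc] at hcD
  refine ⟨?_, ?_, ?_, ?_⟩
  · exact key (x - 1) (y - 1) (-δ) (-δ) habsn habsn (by push_cast; linarith)
      (by push_cast; linarith) (by push_cast; linarith) (by push_cast; linarith)
  · exact key x (y - 1) δ (-δ) habs habsn (by push_cast; linarith)
      (by push_cast; linarith) (by push_cast; linarith) (by push_cast; linarith)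
  · exact key (x - 1) y (-δ) δ habsn habs (by push_cast; linarith)
      (by push_cast; linarith) (by push_cast; linarith) (by push_cast; linarith)
  · exact key x y δ δ habs habs (by push_cast; linarith)
      (by push_cast; linarith) (by push_cast; linarith) (by push_cast; linarith)
section Edges
variable {D : Set Cell} {x y : ℤ}

lemma corner_mem {a b : ℤ} {p : Vertex} (hp : p = (a, b) ∨ p = (a + 1, b) ∨
    p = (a, b + 1) ∨ p = (a + 1, b + 1)) : p ∈ cornersOf (a, b) := by
  simp only [cornersOf, Set.mem_insert_iff, Set.mem_singleton_iff]
  tauto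

lemma edges_even (hEv : Even (x + y))
    (hc : ((x - 1, y - 1) : Cell) ∈ D ∧ ((x, y - 1) : Cell) ∈ D ∧
      ((x - 1, y) : Cell) ∈ D ∧ ((x, y) : Cell) ∈ D) :
    EdgeInDomain D (x, y) (x, y + 1) ∧ EdgeInDomain D (x, y) (x, y - 1) ∧
    EdgeInDomain D (x + 1, y) (x, y) ∧ EdgeInDomain D (x - 1, y) (x, y) := by
  obtain ⟨h00, h10, h01, h11⟩ := hc
  have hparity := Int.even_iff.mp hEv
  refine ⟨⟨Or.inl ⟨hEv, Or.inl rfl⟩, (x, y), h11, ?_, ?_⟩,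
    ⟨Or.inl ⟨hEv, Or.inr rfl⟩, (x - 1, y - 1), h00, ?_, ?_⟩,
    ⟨Or.inr ⟨by rw [Int.not_even_iff]; omega, Or.inr (by simp only [Prod.mk.injEq, and_true, true_and, or_true, true_or]; try omega)⟩,
      (x, y - 1), h10, ?_, ?_⟩,
    ⟨Or.inr ⟨by rw [Int.not_even_iff]; omega, Or.inl (by simp only [Prod.mk.injEq, and_true, true_and, or_true, true_or]; try omega)⟩,
      (x - 1, y), h01, ?_, ?_⟩⟩ <;>
  · apply corner_mem
    simp only [Prod.mk.injEq, and_true, true_and, or_true, true_or]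
    try omega


lemma edges_odd (hOd : ¬ Even (x + y))
    (hc : ((x - 1, y - 1) : Cell) ∈ D ∧ ((x, y - 1) : Cell) ∈ D ∧
      ((x - 1, y) : Cell) ∈ D ∧ ((x, y) : Cell) ∈ D) :
    EdgeInDomain D (x, y) (x + 1, y) ∧ EdgeInDomain D (x, y) (x - 1, y) ∧
    EdgeInDomain D (x, y + 1) (x, y) ∧ EdgeInDomain D (x, y - 1) (x, y) := by
  obtain ⟨h00, h10, h01, h11⟩ := hc
  have hparity := Int.not_even_iff.mp hOd
  refine ⟨⟨Or.inr ⟨hOd, Or.inl rfl⟩, (x, y - 1), h10, ?_, ?_⟩,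
    ⟨Or.inr ⟨hOd, Or.inr rfl⟩, (x - 1, y), h01, ?_, ?_⟩,
    ⟨Or.inl ⟨by rw [Int.even_iff]; omega, Or.inr (by simp only [Prod.mk.injEq, and_true, true_and, or_true, true_or]; try omega)⟩,
      (x, y), h11, ?_, ?_⟩,
    ⟨Or.inl ⟨by rw [Int.even_iff]; omega, Or.inl (by simp only [Prod.mk.injEq, and_true, true_and, or_true, true_or]; try omega)⟩,
      (x - 1, y - 1), h00, ?_, ?_⟩⟩ <;>
  · apply corner_mem
    simp only [Prod.mk.injEq, and_true, true_and, or_true, true_or]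
    try omega


end Edges
lemma mem_pair_left (p q : Cell) : p ∈ ({p, q} : Set Cell) := Set.mem_insert _ _
lemma mem_pair_right (p q : Cell) : q ∈ ({p, q} : Set Cell) := Set.mem_insert_of_mem _ rfl

lemma cell_ne {a b c d : ℤ} (hne : ¬ (a = c ∧ b = d)) : ((a, b) : Cell) ≠ (c, d) := by
  intro he; rw [Prod.mk.injEq] at he; tauto

lemma pair_cells_ne {p q r s : Cell} (h1 : p ≠ r) (h2 : p ≠ s) :
    ({p, q} : Set Cell) ≠ {r, s} := by
  intro heq
  have hm : p ∈ ({r, s} : Set Cell) := heq ▸ mem_pair_left p q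
  rcases Set.mem_insert_iff.mp hm with h' | h'
  · exact h1 h'
  · exact h2 (Set.mem_singleton_iff.mp h')

lemma pair_cells_ne' {p q r s : Cell} (h1 : q ≠ r) (h2 : q ≠ s) :
    ({p, q} : Set Cell) ≠ {r, s} := by
  intro heq
  have hm : q ∈ ({r, s} : Set Cell) := heq ▸ mem_pair_right p q
  rcases Set.mem_insert_iff.mp hm with h' | h'
  · exact h1 h'
  · exact h2 (Set.mem_singleton_iff.mp h')

section Main
variable {D : Set Cell} {O : Vertex} {T : Set (Set Cell)} {h : Vertex → ℤ} {x y : ℤ}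

lemma hDominoes_subset_iff :
    hDominoes (x, y) ⊆ T ↔
      ({(x - 1, y - 1), (x, y - 1)} : Set Cell) ∈ T ∧
      ({(x - 1, y), (x, y)} : Set Cell) ∈ T := by
  simp [hDominoes, Set.insert_subset_iff]

lemma vDominoes_subset_iff :
    vDominoes (x, y) ⊆ T ↔
      ({(x - 1, y - 1), (x - 1, y)} : Set Cell) ∈ T ∧
      ({(x, y - 1), (x, y)} : Set Cell) ∈ T := by
  simp [vDominoes, Set.insert_subset_iff]

lemma hsub_even (hEv : Even (x + y)) (hv : IsInteriorVertexOf D (x, y))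
    (hT : IsTiling D T) (hh : IsHeightFunction D O T h) :
    hDominoes (x, y) ⊆ T ↔ IsLocalMax D h (x, y) := by
  obtain ⟨eUp, eDown, eRight, eLeft⟩ := edges_even hEv (interior_cells hv)
  rw [hDominoes_subset_iff]
  constructor
  · rintro ⟨hB, hA⟩
    refine ⟨hv, ?_⟩
    intro w hw
    have hup : h (x, y + 1) = h (x, y) - 3 :=
      (hh.2 _ _ eUp).1 ((axE_up x y).mpr hA)
    have hdown : h (x, y - 1) = h (x, y) - 3 :=
      (hh.2 _ _ eDown).1 ((axE_down x y).mpr hB)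
    have hright : h (x, y) = h (x + 1, y) + 1 := by
      refine (hh.2 _ _ eRight).2 ?_
      rw [axE_right_in]
      intro hR
      refine pair_cells_ne ?_ ?_
        (not_both hT hR hA (mem_pair_right _ _) (mem_pair_right _ _)) <;>
        exact cell_ne (by omega)
    have hleft : h (x, y) = h (x - 1, y) + 1 := by
      refine (hh.2 _ _ eLeft).2 ?_
      rw [axE_left_in]
      intro hL
      refine pair_cells_ne' ?_ ?_
        (not_both hT hL hB (mem_pair_left _ _) (mem_pair_left _ _)) <;>
        exact cell_ne (by omega)
    rcases hw with rfl | rfl | rfl | rfl <;> simp only [Prod.fst, Prod.snd] <;> omega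
  · intro hmax
    constructor
    · have hlt := hmax.2 (x, y - 1) (Or.inr (Or.inr (Or.inr rfl)))
      by_contra hnot
      have hax : ¬ ∃ d ∈ T, IsCentralAxis d (x, y) (x, y - 1) := by
        rw [axE_down]; exact hnot
      have := (hh.2 _ _ eDown).2 hax
      omega
    · have hlt := hmax.2 (x, y + 1) (Or.inr (Or.inr (Or.inl rfl)))
      by_contra hnot
      have hax : ¬ ∃ d ∈ T, IsCentralAxis d (x, y) (x, y + 1) := by
        rw [axE_up]; exact hnot
      have := (hh.2 _ _ eUp).2 hax
      omega

lemma vsub_even (hEv : Even (x + y)) (hv : IsInteriorVertexOf D (x, y))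
    (hT : IsTiling D T) (hh : IsHeightFunction D O T h) :
    vDominoes (x, y) ⊆ T ↔ IsLocalMin D h (x, y) := by
  obtain ⟨eUp, eDown, eRight, eLeft⟩ := edges_even hEv (interior_cells hv)
  rw [vDominoes_subset_iff]
  constructor
  · rintro ⟨hL, hR⟩
    refine ⟨hv, ?_⟩
    intro w hw
    have hright : h (x, y) = h (x + 1, y) - 3 :=
      (hh.2 _ _ eRight).1 ((axE_right_in x y).mpr hR)
    have hleft : h (x, y) = h (x - 1, y) - 3 :=
      (hh.2 _ _ eLeft).1 ((axE_left_in x y).mpr hL)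
    have hup : h (x, y + 1) = h (x, y) + 1 := by
      refine (hh.2 _ _ eUp).2 ?_
      rw [axE_up]
      intro hA
      refine pair_cells_ne ?_ ?_
        (not_both hT hA hR (mem_pair_right _ _) (mem_pair_right _ _)) <;>
        exact cell_ne (by omega)
    have hdown : h (x, y - 1) = h (x, y) + 1 := by
      refine (hh.2 _ _ eDown).2 ?_
      rw [axE_down]
      intro hB
      refine pair_cells_ne' ?_ ?_
        (not_both hT hB hL (mem_pair_left _ _) (mem_pair_left _ _)) <;>
        exact cell_ne (by omega)
    rcases hw with rfl | rfl | rfl | rfl <;> simp only [Prod.fst, Prod.snd] <;> omega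
  · intro hmin
    constructor
    · have hlt := hmin.2 (x - 1, y) (Or.inr (Or.inl rfl))
      by_contra hnot
      have hax : ¬ ∃ d ∈ T, IsCentralAxis d (x - 1, y) (x, y) := by
        rw [axE_left_in]; exact hnot
      have := (hh.2 _ _ eLeft).2 hax
      omega
    · have hlt := hmin.2 (x + 1, y) (Or.inl rfl)
      by_contra hnot
      have hax : ¬ ∃ d ∈ T, IsCentralAxis d (x + 1, y) (x, y) := by
        rw [axE_right_in]; exact hnot
      have := (hh.2 _ _ eRight).2 hax
      omega

lemma vsub_odd (hOd : ¬ Even (x + y)) (hv : IsInteriorVertexOf D (x, y))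
    (hT : IsTiling D T) (hh : IsHeightFunction D O T h) :
    vDominoes (x, y) ⊆ T ↔ IsLocalMax D h (x, y) := by
  obtain ⟨eRight, eLeft, eUp, eDown⟩ := edges_odd hOd (interior_cells hv)
  rw [vDominoes_subset_iff]
  constructor
  · rintro ⟨hL, hR⟩
    refine ⟨hv, ?_⟩
    intro w hw
    have hright : h (x + 1, y) = h (x, y) - 3 :=
      (hh.2 _ _ eRight).1 ((axE_right x y).mpr hR)
    have hleft : h (x - 1, y) = h (x, y) - 3 :=
      (hh.2 _ _ eLeft).1 ((axE_left x y).mpr hL)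
    have hup : h (x, y) = h (x, y + 1) + 1 := by
      refine (hh.2 _ _ eUp).2 ?_
      rw [axE_up_in]
      intro hA
      refine pair_cells_ne ?_ ?_
        (not_both hT hA hR (mem_pair_right _ _) (mem_pair_right _ _)) <;>
        exact cell_ne (by omega)
    have hdown : h (x, y) = h (x, y - 1) + 1 := by
      refine (hh.2 _ _ eDown).2 ?_
      rw [axE_down_in]
      intro hB
      refine pair_cells_ne' ?_ ?_
        (not_both hT hB hL (mem_pair_left _ _) (mem_pair_left _ _)) <;>
        exact cell_ne (by omega)
    rcases hw with rfl | rfl | rfl | rfl <;> simp only [Prod.fst, Prod.snd] <;> omega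
  · intro hmax
    constructor
    · have hlt := hmax.2 (x - 1, y) (Or.inr (Or.inl rfl))
      by_contra hnot
      have hax : ¬ ∃ d ∈ T, IsCentralAxis d (x, y) (x - 1, y) := by
        rw [axE_left]; exact hnot
      have := (hh.2 _ _ eLeft).2 hax
      omega
    · have hlt := hmax.2 (x + 1, y) (Or.inl rfl)
      by_contra hnot
      have hax : ¬ ∃ d ∈ T, IsCentralAxis d (x, y) (x + 1, y) := by
        rw [axE_right]; exact hnot
      have := (hh.2 _ _ eRight).2 hax
      omega

lemma hsub_odd (hOd : ¬ Even (x + y)) (hv : IsInteriorVertexOf D (x, y))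
    (hT : IsTiling D T) (hh : IsHeightFunction D O T h) :
    hDominoes (x, y) ⊆ T ↔ IsLocalMin D h (x, y) := by
  obtain ⟨eRight, eLeft, eUp, eDown⟩ := edges_odd hOd (interior_cells hv)
  rw [hDominoes_subset_iff]
  constructor
  · rintro ⟨hB, hA⟩
    refine ⟨hv, ?_⟩
    intro w hw
    have hup : h (x, y) = h (x, y + 1) - 3 :=
      (hh.2 _ _ eUp).1 ((axE_up_in x y).mpr hA)
    have hdown : h (x, y) = h (x, y - 1) - 3 :=
      (hh.2 _ _ eDown).1 ((axE_down_in x y).mpr hB)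
    have hright : h (x + 1, y) = h (x, y) + 1 := by
      refine (hh.2 _ _ eRight).2 ?_
      rw [axE_right]
      intro hR
      refine pair_cells_ne ?_ ?_
        (not_both hT hR hA (mem_pair_right _ _) (mem_pair_right _ _)) <;>
        exact cell_ne (by omega)
    have hleft : h (x - 1, y) = h (x, y) + 1 := by
      refine (hh.2 _ _ eLeft).2 ?_
      rw [axE_left]
      intro hL
      refine pair_cells_ne' ?_ ?_
        (not_both hT hL hB (mem_pair_left _ _) (mem_pair_left _ _)) <;>
        exact cell_ne (by omega)
    rcases hw with rfl | rfl | rfl | rfl <;> simp only [Prod.fst, Prod.snd] <;> omega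
  · intro hmin
    constructor
    · have hlt := hmin.2 (x, y - 1) (Or.inr (Or.inr (Or.inr rfl)))
      by_contra hnot
      have hax : ¬ ∃ d ∈ T, IsCentralAxis d (x, y - 1) (x, y) := by
        rw [axE_down_in]; exact hnot
      have := (hh.2 _ _ eDown).2 hax
      omega
    · have hlt := hmin.2 (x, y + 1) (Or.inr (Or.inr (Or.inl rfl)))
      by_contra hnot
      have hax : ¬ ∃ d ∈ T, IsCentralAxis d (x, y + 1) (x, y) := by
        rw [axE_up_in]; exact hnot
      have := (hh.2 _ _ eUp).2 hax
      omega

end Main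
section Flip
variable {D : Set Cell} {T : Set (Set Cell)} {x y : ℤ}

lemma flip_from_even (hv : IsInteriorVertexOf D (x, y)) (hEv : Even (x + y)) :
    (∃ T', UpwardFlip D (x, y) T T') ↔ vDominoes (x, y) ⊆ T := by
  constructor
  · rintro ⟨T', _, ⟨_, hsub, _⟩ | ⟨hodd, _, _⟩⟩
    · exact hsub
    · exact absurd hEv hodd
  · intro hsub
    exact ⟨(T \ vDominoes (x, y)) ∪ hDominoes (x, y), hv, Or.inl ⟨hEv, hsub, rfl⟩⟩

lemma flip_from_odd (hv : IsInteriorVertexOf D (x, y)) (hOd : ¬ Even (x + y)) :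
    (∃ T', UpwardFlip D (x, y) T T') ↔ hDominoes (x, y) ⊆ T := by
  constructor
  · rintro ⟨T', _, ⟨hev, _, _⟩ | ⟨_, hsub, _⟩⟩
    · exact absurd hev hOd
    · exact hsub
  · intro hsub
    exact ⟨(T \ hDominoes (x, y)) ∪ vDominoes (x, y), hv, Or.inr ⟨hOd, hsub, rfl⟩⟩

lemma flip_into_even (hv : IsInteriorVertexOf D (x, y)) (hT : IsTiling D T)
    (hEv : Even (x + y)) :
    (∃ T', UpwardFlip D (x, y) T' T) ↔ hDominoes (x, y) ⊆ T := by
  constructor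
  · rintro ⟨T', _, ⟨_, _, hTeq⟩ | ⟨hodd, _, _⟩⟩
    · rw [hTeq]; exact Set.subset_union_right
    · exact absurd hEv hodd
  · intro hsub
    obtain ⟨hB, hA⟩ := hDominoes_subset_iff.mp hsub
    refine ⟨(T \ hDominoes (x, y)) ∪ vDominoes (x, y), hv,
      Or.inl ⟨hEv, Set.subset_union_right, ?_⟩⟩
    have hdis : (T \ hDominoes (x, y)) ∩ vDominoes (x, y) ⊆ ∅ := by
      rintro s ⟨⟨hsT, -⟩, hsV⟩
      simp only [vDominoes, Set.mem_insert_iff, Set.mem_singleton_iff] at hsV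
      rcases hsV with rfl | rfl
      · exact absurd (not_both hT hsT hB (mem_pair_left _ _) (mem_pair_left _ _))
          (pair_cells_ne' (cell_ne (by omega)) (cell_ne (by omega)))
      · exact absurd (not_both hT hsT hA (mem_pair_right _ _) (mem_pair_right _ _))
          (pair_cells_ne (cell_ne (by omega)) (cell_ne (by omega)))
    rw [Set.union_diff_cancel_right hdis, Set.diff_union_of_subset hsub]

lemma flip_into_odd (hv : IsInteriorVertexOf D (x, y)) (hT : IsTiling D T)
    (hOd : ¬ Even (x + y)) :
    (∃ T', UpwardFlip D (x, y) T' T) ↔ vDominoes (x, y) ⊆ T := by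
  constructor
  · rintro ⟨T', _, ⟨hev, _, _⟩ | ⟨_, _, hTeq⟩⟩
    · exact absurd hev hOd
    · rw [hTeq]; exact Set.subset_union_right
  · intro hsub
    obtain ⟨hL, hR⟩ := vDominoes_subset_iff.mp hsub
    refine ⟨(T \ vDominoes (x, y)) ∪ hDominoes (x, y), hv,
      Or.inr ⟨hOd, Set.subset_union_right, ?_⟩⟩
    have hdis : (T \ vDominoes (x, y)) ∩ hDominoes (x, y) ⊆ ∅ := by
      rintro s ⟨⟨hsT, -⟩, hsH⟩
      simp only [hDominoes, Set.mem_insert_iff, Set.mem_singleton_iff] at hsH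
      rcases hsH with rfl | rfl
      · exact absurd (not_both hT hsT hL (mem_pair_left _ _) (mem_pair_left _ _))
          (pair_cells_ne' (cell_ne (by omega)) (cell_ne (by omega)))
      · exact absurd (not_both hT hsT hR (mem_pair_right _ _) (mem_pair_right _ _))
          (pair_cells_ne (cell_ne (by omega)) (cell_ne (by omega)))
    rw [Set.union_diff_cancel_right hdis, Set.diff_union_of_subset hsub]

end Flip

/-- flips occur exactly at local extrema of the height function. -/
theorem flip_iff_localExtremum
    (D : Set Cell) (hD : IsDomain D)
    (O : Vertex) (hO : IsBoundaryVertexOf D O)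
    (T : Set (Set Cell)) (hT : IsTiling D T)
    (v : Vertex) (hv : IsInteriorVertexOf D v)
    (h : Vertex → ℤ) (hh : IsHeightFunction D O T h) :
    ((∃ T' : Set (Set Cell), UpwardFlip D v T' T) ↔ IsLocalMax D h v) ∧
    ((∃ T' : Set (Set Cell), UpwardFlip D v T T') ↔ IsLocalMin D h v) := by
  obtain ⟨x, y⟩ := v
  by_cases hEv : Even (x + y)
  · exact ⟨(flip_into_even hv hT hEv).trans (hsub_even hEv hv hT hh),
      (flip_from_even hv hEv).trans (vsub_even hEv hv hT hh)⟩
  · exact ⟨(flip_into_odd hv hT hEv).trans (vsub_odd hEv hv hT hh),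
      (flip_from_odd hv hEv).trans (hsub_odd hEv hv hT hh)⟩

end DominoTiling
end

section
/- For any two tilings T and T' of the same domain D and any vertex v of D, the difference h_T(v) − h_{T'}(v) is divisible by 4. -/
namespace DominoTiling

section Aux

open Relation Set

/-- Symmetrized edge relation. -/
def Rel (D : Set Cell) (v w : Vertex) : Prop :=
  EdgeInDomain D v w ∨ EdgeInDomain D w v

lemma Rel_symm {D : Set Cell} : Symmetric (Rel D) := fun _ _ h => h.symm

lemma mem_cornersOf_iff {c : Cell} {v : Vertex} :
    v ∈ cornersOf c ↔
      (v.1 = c.1 ∨ v.1 = c.1 + 1) ∧ (v.2 = c.2 ∨ v.2 = c.2 + 1) := by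
  obtain ⟨a, b⟩ := c
  obtain ⟨x, y⟩ := v
  simp [cornersOf, Prod.ext_iff]
  tauto

lemma R_vert {D : Set Cell} {c : Cell} (hc : c ∈ D) {x y : ℤ}
    (h1 : ((x, y) : Vertex) ∈ cornersOf c) (h2 : ((x, y + 1) : Vertex) ∈ cornersOf c) :
    Rel D (x, y) (x, y + 1) := by
  by_cases he : Even (x + y)
  · exact Or.inl ⟨Or.inl ⟨he, Or.inl rfl⟩, c, hc, h1, h2⟩
  · refine Or.inr ⟨Or.inl ⟨?_, Or.inr ?_⟩, c, hc, h2, h1⟩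
    · simpa [← add_assoc, Int.even_add_one] using he
    · simp

lemma R_horiz {D : Set Cell} {c : Cell} (hc : c ∈ D) {x y : ℤ}
    (h1 : ((x, y) : Vertex) ∈ cornersOf c) (h2 : ((x + 1, y) : Vertex) ∈ cornersOf c) :
    Rel D (x, y) (x + 1, y) := by
  by_cases he : Even (x + y)
  · refine Or.inr ⟨Or.inr ⟨?_, Or.inr ?_⟩, c, hc, h2, h1⟩
    · simpa [add_right_comm x 1 y, Int.even_add_one] using he
    · simp
  · exact Or.inl ⟨Or.inr ⟨he, Or.inl rfl⟩, c, hc, h1, h2⟩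

/-- All corners of a cell of `D` are connected by edges. -/
lemma cell_conn {D : Set Cell} {c : Cell} (hc : c ∈ D) {u w : Vertex}
    (hu : u ∈ cornersOf c) (hw : w ∈ cornersOf c) :
    Relation.ReflTransGen (Rel D) u w := by
  obtain ⟨a, b⟩ := c
  have m00 : ((a, b) : Vertex) ∈ cornersOf (a, b) := by simp [mem_cornersOf_iff]
  have m10 : ((a + 1, b) : Vertex) ∈ cornersOf (a, b) := by simp [mem_cornersOf_iff]
  have m01 : ((a, b + 1) : Vertex) ∈ cornersOf (a, b) := by simp [mem_cornersOf_iff]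
  have m11 : ((a + 1, b + 1) : Vertex) ∈ cornersOf (a, b) := by simp [mem_cornersOf_iff]
  have e1 : Rel D (a, b) (a + 1, b) := R_horiz hc m00 m10
  have e2 : Rel D (a, b) (a, b + 1) := R_vert hc m00 m01
  have e3 : Rel D (a + 1, b) (a + 1, b + 1) := R_vert hc m10 m11
  have base : ∀ z ∈ cornersOf ((a, b) : Cell), Relation.ReflTransGen (Rel D) (a, b) z := by
    intro z hz
    rw [mem_cornersOf_iff] at hz
    obtain ⟨x, y⟩ := z
    simp only at hz
    rcases hz with ⟨hx | hx, hy | hy⟩ <;> subst hx <;> subst hy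
    · exact .refl
    · exact .single e2
    · exact .single e1
    · exact (Relation.ReflTransGen.single e1).tail e3
  have : Std.Symm (Rel D) := ⟨fun _ _ h => Rel_symm h⟩
  exact ((Std.Symm.symm (r := Relation.ReflTransGen (Rel D)) _ _) (base u hu)).trans (base w hw)

lemma lower_corner_mem (c : Cell) : ((c.1 : ℝ), (c.2 : ℝ)) ∈ cellSquare c := by
  simp only [cellSquare, Set.mem_Icc, Prod.mk_le_mk]
  refine ⟨⟨le_refl _, le_refl _⟩, ⟨by linarith, by linarith⟩⟩

lemma isClosed_cellSquare (c : Cell) : IsClosed (cellSquare c) := by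
  rw [cellSquare, Set.Icc_prod_eq]
  exact (isClosed_Icc).prod isClosed_Icc

/-- Intersecting cell squares share a common corner. -/
lemma shared_corner {c c' : Cell} (hne : (cellSquare c ∩ cellSquare c').Nonempty) :
    ∃ v : Vertex, v ∈ cornersOf c ∧ v ∈ cornersOf c' := by
  obtain ⟨p, hp, hp'⟩ := hne
  rw [cellSquare, Set.mem_Icc, Prod.mk_le_mk, Prod.mk_le_mk] at hp hp'
  have h1 : (c.1 : ℝ) ≤ (c'.1 : ℝ) + 1 := le_trans hp.1.1 hp'.2.1
  have h2 : (c'.1 : ℝ) ≤ (c.1 : ℝ) + 1 := le_trans hp'.1.1 hp.2.1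
  have h3 : (c.2 : ℝ) ≤ (c'.2 : ℝ) + 1 := le_trans hp.1.2 hp'.2.2
  have h4 : (c'.2 : ℝ) ≤ (c.2 : ℝ) + 1 := le_trans hp'.1.2 hp.2.2
  have i1 : c.1 ≤ c'.1 + 1 := by exact_mod_cast h1
  have i2 : c'.1 ≤ c.1 + 1 := by exact_mod_cast h2
  have i3 : c.2 ≤ c'.2 + 1 := by exact_mod_cast h3
  have i4 : c'.2 ≤ c.2 + 1 := by exact_mod_cast h4
  refine ⟨(max c.1 c'.1, max c.2 c'.2), ?_, ?_⟩ <;>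
    · rw [mem_cornersOf_iff]
      constructor <;> omega

/-- Every vertex of `D` is a corner of some cell of `D`. -/
lemma vertex_corner {D : Set Cell} {v : Vertex} (hv : IsVertexOf D v) :
    ∃ c ∈ D, v ∈ cornersOf c := by
  obtain ⟨c, hc, hm⟩ := Set.mem_iUnion₂.mp hv
  rw [cellSquare, Set.mem_Icc] at hm
  simp only [embedV, Prod.mk_le_mk] at hm
  obtain ⟨⟨hx1, hy1⟩, ⟨hx2, hy2⟩⟩ := hm
  have ix1 : c.1 ≤ v.1 := by exact_mod_cast hx1
  have iy1 : c.2 ≤ v.2 := by exact_mod_cast hy1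
  have ix2 : v.1 ≤ c.1 + 1 := by exact_mod_cast hx2
  have iy2 : v.2 ≤ c.2 + 1 := by exact_mod_cast hy2
  refine ⟨c, hc, ?_⟩
  rw [mem_cornersOf_iff]
  constructor <;> omega

/-- Cells of a domain are connected through overlapping squares. -/
lemma cell_chain {D : Set Cell} (hD : IsDomain D) {c c' : Cell}
    (hc : c ∈ D) (hc' : c' ∈ D) :
    Relation.ReflTransGen
      (fun x y => x ∈ D ∧ y ∈ D ∧ (cellSquare x ∩ cellSquare y).Nonempty) c c' := by
  set CR : Cell → Cell → Prop :=
    fun x y => x ∈ D ∧ y ∈ D ∧ (cellSquare x ∩ cellSquare y).Nonempty with hCR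
  by_contra hnot
  set U : Set Cell := {x | x ∈ D ∧ Relation.ReflTransGen CR c x} with hU
  set A : Set (ℝ × ℝ) := ⋃ x ∈ U, cellSquare x with hA
  set B : Set (ℝ × ℝ) := ⋃ x ∈ D \ U, cellSquare x with hB
  have hUD : U ⊆ D := fun x hx => hx.1
  have hAc : IsClosed A :=
    (hD.finite.subset hUD).isClosed_biUnion (fun i _ => isClosed_cellSquare i)
  have hBc : IsClosed B :=
    (hD.finite.subset Set.diff_subset).isClosed_biUnion (fun i _ => isClosed_cellSquare i)
  have hdisj : A ∩ B = ∅ := by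
    by_contra hne
    obtain ⟨p, hpA, hpB⟩ := Set.nonempty_iff_ne_empty.mpr hne
    obtain ⟨x, hx, hpx⟩ := Set.mem_iUnion₂.mp hpA
    obtain ⟨y, hy, hpy⟩ := Set.mem_iUnion₂.mp hpB
    have : y ∈ U := ⟨hy.1, hx.2.tail ⟨hx.1, hy.1, ⟨p, hpx, hpy⟩⟩⟩
    exact hy.2 this
  have hcover : regionOf D ⊆ A ∪ B := by
    intro p hp
    obtain ⟨x, hx, hpx⟩ := Set.mem_iUnion₂.mp hp
    by_cases hxU : x ∈ U
    · exact Or.inl (Set.mem_iUnion₂.mpr ⟨x, hxU, hpx⟩)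
    · exact Or.inr (Set.mem_iUnion₂.mpr ⟨x, ⟨hx, hxU⟩, hpx⟩)
  have hprec : IsPreconnected (regionOf D) := by
    have := hD.simplyConnected
    have : ConnectedSpace (regionOf D) := PathConnectedSpace.connectedSpace
    exact isPreconnected_iff_preconnectedSpace.mpr inferInstance
  have hcU : c ∈ U := ⟨hc, Relation.ReflTransGen.refl⟩
  have hc'B : c' ∈ D \ U := ⟨hc', fun h => hnot h.2⟩
  rcases isPreconnected_iff_subset_of_disjoint_closed.mp hprec A B hAc hBc hcover
      (by rw [hdisj, Set.inter_empty]) with hsub | hsub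
  · have hpB : ((c'.1 : ℝ), (c'.2 : ℝ)) ∈ B :=
      Set.mem_iUnion₂.mpr ⟨c', hc'B, lower_corner_mem c'⟩
    have hpR : ((c'.1 : ℝ), (c'.2 : ℝ)) ∈ regionOf D :=
      Set.mem_iUnion₂.mpr ⟨c', hc', lower_corner_mem c'⟩
    have : ((c'.1 : ℝ), (c'.2 : ℝ)) ∈ A ∩ B := ⟨hsub hpR, hpB⟩
    rw [hdisj] at this
    exact this
  · have hpA : ((c.1 : ℝ), (c.2 : ℝ)) ∈ A :=
      Set.mem_iUnion₂.mpr ⟨c, hcU, lower_corner_mem c⟩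
    have hpR : ((c.1 : ℝ), (c.2 : ℝ)) ∈ regionOf D :=
      Set.mem_iUnion₂.mpr ⟨c, hc, lower_corner_mem c⟩
    have : ((c.1 : ℝ), (c.2 : ℝ)) ∈ A ∩ B := ⟨hpA, hsub hpR⟩
    rw [hdisj] at this
    exact this

/-- Corners along a chain of cells are connected. -/
lemma reach_of_chain {D : Set Cell} {c1 c2 : Cell}
    (h : Relation.ReflTransGen
      (fun x y => x ∈ D ∧ y ∈ D ∧ (cellSquare x ∩ cellSquare y).Nonempty) c1 c2)
    (hc1 : c1 ∈ D) :
    ∀ u ∈ cornersOf c1, ∀ w ∈ cornersOf c2, Relation.ReflTransGen (Rel D) u w := by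
  induction h with
  | refl => exact fun u hu w hw => cell_conn hc1 hu hw
  | tail h1 h2 ih =>
    intro u hu w hw
    obtain ⟨s, hsb, hsc⟩ := shared_corner h2.2.2
    exact (ih u hu s hsb).trans (cell_conn h2.2.1 hsc hw)

/-- Any two vertices of `D` are connected by lattice edges in `D`. -/
lemma vertex_conn {D : Set Cell} (hD : IsDomain D) {u w : Vertex}
    (hu : IsVertexOf D u) (hw : IsVertexOf D w) :
    Relation.ReflTransGen (Rel D) u w := by
  obtain ⟨c, hc, hcu⟩ := vertex_corner hu
  obtain ⟨c', hc', hcw⟩ := vertex_corner hw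
  exact reach_of_chain (cell_chain hD hc hc') hc u hcu w hcw

end Aux

/-- the heights of two tilings of the same domain differ by a
multiple of 4 at every vertex. -/
theorem four_dvd_height_difference
    (D : Set Cell) (hD : IsDomain D)
    (O : Vertex) (hO : IsBoundaryVertexOf D O)
    (T T' : Set (Set Cell)) (hT : IsTiling D T) (hT' : IsTiling D T')
    (h h' : Vertex → ℤ)
    (hh : IsHeightFunction D O T h) (hh' : IsHeightFunction D O T' h') :
    ∀ v : Vertex, IsVertexOf D v → (4 : ℤ) ∣ (h v - h' v) := by
  have step : ∀ {g : Vertex → ℤ} {T₀ : Set (Set Cell)},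
      IsHeightFunction D O T₀ g → ∀ {a b : Vertex}, EdgeInDomain D a b →
      (g b = g a + 1 ∨ g b = g a - 3) := by
    intro g T₀ hg a b e
    by_cases hax : ∃ d ∈ T₀, IsCentralAxis d a b
    · exact Or.inr ((hg.2 a b e).1 hax)
    · exact Or.inl ((hg.2 a b e).2 hax)
  intro v hv
  have hreach := vertex_conn hD hO.1 hv
  clear hv
  induction hreach with
  | refl => simp [hh.1, hh'.1]
  | tail h1 h2 ih =>
    rcases h2 with e | e
    · rcases step hh e with d1 | d1 <;> rcases step hh' e with d2 | d2 <;> omega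
    · rcases step hh e with d1 | d1 <;> rcases step hh' e with d2 | d2 <;> omega

end DominoTiling
end

section
/- Normalized heights count flips: let D be a tileable domain with minimal tiling T_min, let T be any tiling of D, and let T_min = T_0, T_1, …, T_p = T be any sequence of tilings in which each T_{i+1} is obtained from T_i by an upward flip. Then for every interior vertex v, the number of indices i such that the flip from T_i to T_{i+1} is performed at v equals (h_T(v) − h_{T_min}(v))/4; in particular this number is the same for every such sequence. -/
namespace DominoTiling

/-!
An upward flip at an interior vertex `v` turns the two directed edges ending at `v` from central
axes into ordinary edges, the two edges starting at `v` from ordinary edges into central axes, and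
leaves every other edge unchanged. Hence adding `4` at `v` to a height function of a tiling gives a
height function of the flipped tiling, so along the sequence of flips
`h_min + 4 · #(flips at w)` is a height function of `T`. Height functions of a tiling of a domain
are unique: the difference of two of them is constant along edges, every cell has its four
corners joined by edges, and the cells of a domain are linked through shared corners because the
region is connected.
-/

theorem mem_cornersOf {v : Vertex} {c : Cell} :
    v ∈ cornersOf c ↔ (v.1 = c.1 ∨ v.1 = c.1 + 1) ∧ (v.2 = c.2 ∨ v.2 = c.2 + 1) := by
  rcases v with ⟨x, y⟩; rcases c with ⟨a, b⟩
  simp only [cornersOf, Set.mem_insert_iff, Set.mem_singleton_iff, Prod.mk.injEq]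
  tauto

theorem mem_cellSquare {c : Cell} {z : ℝ × ℝ} :
    z ∈ cellSquare c ↔ (c.1 : ℝ) ≤ z.1 ∧ z.1 ≤ c.1 + 1 ∧ (c.2 : ℝ) ≤ z.2 ∧ z.2 ≤ c.2 + 1 := by
  simp only [cellSquare, Set.mem_Icc, Prod.le_def]
  tauto

theorem embedV_mem_cellSquare (c : Cell) : embedV c ∈ cellSquare c := by
  simp [mem_cellSquare, embedV]

theorem mem_regionOf {D : Set Cell} {z : ℝ × ℝ} :
    z ∈ regionOf D ↔ ∃ c ∈ D, z ∈ cellSquare c := by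
  simp [regionOf]

theorem isClosed_regionOf {D : Set Cell} (hD : D.Finite) : IsClosed (regionOf D) :=
  hD.isClosed_biUnion fun _ _ => isClosed_Icc

theorem IsDomain.isPreconnected {D : Set Cell} (hD : IsDomain D) :
    IsPreconnected (regionOf D) :=
  have := hD.simplyConnected
  (isPathConnected_iff_pathConnectedSpace.mpr inferInstance).isConnected.isPreconnected

theorem mem_cornersOf_of_embedV_mem {v : Vertex} {c : Cell} (h : embedV v ∈ cellSquare c) :
    v ∈ cornersOf c := by
  simp only [mem_cellSquare, embedV] at h
  obtain ⟨h1, h2, h3, h4⟩ := h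
  have : c.1 ≤ v.1 ∧ v.1 ≤ c.1 + 1 ∧ c.2 ≤ v.2 ∧ v.2 ≤ c.2 + 1 :=
    ⟨by exact_mod_cast h1, by exact_mod_cast h2, by exact_mod_cast h3, by exact_mod_cast h4⟩
  exact mem_cornersOf.mpr (by omega)

theorem exists_mem_cornersOf_of_isVertexOf {D : Set Cell} {v : Vertex} (h : IsVertexOf D v) :
    ∃ c ∈ D, v ∈ cornersOf c :=
  let ⟨c, hc, hm⟩ := mem_regionOf.mp h
  ⟨c, hc, mem_cornersOf_of_embedV_mem hm⟩

theorem exists_mem_cornersOf_of_nonempty_inter {c c' : Cell}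
    (h : (cellSquare c ∩ cellSquare c').Nonempty) :
    ∃ w : Vertex, w ∈ cornersOf c ∧ w ∈ cornersOf c' := by
  obtain ⟨z, hz, hz'⟩ := h
  rw [mem_cellSquare] at hz hz'
  have : (c.1 : ℝ) ≤ c'.1 + 1 ∧ (c'.1 : ℝ) ≤ c.1 + 1 ∧ (c.2 : ℝ) ≤ c'.2 + 1 ∧
      (c'.2 : ℝ) ≤ c.2 + 1 := by
    refine ⟨?_, ?_, ?_, ?_⟩ <;> linarith
  norm_cast at this
  refine ⟨(max c.1 c'.1, max c.2 c'.2), ?_, ?_⟩ <;> rw [mem_cornersOf] <;> omega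

def SharesCornerIn (D : Set Cell) (c c' : Cell) : Prop :=
  c' ∈ D ∧ ∃ w, w ∈ cornersOf c ∧ w ∈ cornersOf c'

/-- The cells reachable from `c₀` and the other cells of `D` have disjoint closed regions,
so by preconnectedness one of the two families is empty. -/
theorem reflTransGen_of_isPreconnected {D : Set Cell} (hfin : D.Finite)
    (hconn : IsPreconnected (regionOf D)) {c₀ c : Cell} (hc₀ : c₀ ∈ D) (hc : c ∈ D) :
    Relation.ReflTransGen (SharesCornerIn D) c₀ c := by
  set A : Set Cell := {c ∈ D | Relation.ReflTransGen (SharesCornerIn D) c₀ c}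
  have hcover : regionOf D ⊆ regionOf A ∪ regionOf (D \ A) := fun z hz => by
    obtain ⟨x, hx, hzx⟩ := mem_regionOf.mp hz
    by_cases hxA : x ∈ A
    exacts [Or.inl (mem_regionOf.mpr ⟨x, hxA, hzx⟩), Or.inr (mem_regionOf.mpr ⟨x, ⟨hx, hxA⟩, hzx⟩)]
  have hdisj : Disjoint (regionOf A) (regionOf (D \ A)) := Set.disjoint_left.mpr fun z hzA hzB => by
    obtain ⟨x, hx, hzx⟩ := mem_regionOf.mp hzA
    obtain ⟨y, hy, hzy⟩ := mem_regionOf.mp hzB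
    exact hy.2 ⟨hy.1, hx.2.tail ⟨hy.1, exists_mem_cornersOf_of_nonempty_inter ⟨z, hzx, hzy⟩⟩⟩
  rcases (isPreconnected_iff_subset_of_fully_disjoint_closed (isClosed_regionOf hfin)).mp hconn
    _ _ (isClosed_regionOf (hfin.subset (Set.sep_subset _ _)))
    (isClosed_regionOf (hfin.subset Set.sdiff_subset)) hcover hdisj with h | h
  · obtain ⟨x, hx, hcx⟩ := mem_regionOf.mp (h (mem_regionOf.mpr ⟨c, hc, embedV_mem_cellSquare c⟩))
    exact hx.2.tail ⟨hc, c, mem_cornersOf_of_embedV_mem hcx, mem_cornersOf_of_embedV_mem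
      (embedV_mem_cellSquare c)⟩
  · obtain ⟨y, hy, hc₀y⟩ :=
      mem_regionOf.mp (h (mem_regionOf.mpr ⟨c₀, hc₀, embedV_mem_cellSquare c₀⟩))
    exact absurd ⟨hy.1, .single ⟨hy.1, c₀, mem_cornersOf_of_embedV_mem
      (embedV_mem_cellSquare c₀), mem_cornersOf_of_embedV_mem hc₀y⟩⟩ hy.2

theorem Adjacent.isDirEdge_or {v w : Vertex} (h : Adjacent v w) :
    IsDirEdge v w ∨ IsDirEdge w v := by
  obtain ⟨x, y⟩ := v
  rcases h with rfl | rfl | rfl | rfl <;>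
    simp only [IsDirEdge, Int.even_iff, Prod.mk.injEq, and_true, true_and, true_or, or_true] <;>
    omega

section ConstantAlongEdges

variable {α : Type*} {D : Set Cell} {g : Vertex → α}

theorem apply_eq_of_mem_cornersOf (hg : ∀ p q, EdgeInDomain D p q → g q = g p) {c : Cell}
    (hc : c ∈ D) {w : Vertex} (hw : w ∈ cornersOf c) : g w = g c := by
  have step : ∀ u u', u ∈ cornersOf c → u' ∈ cornersOf c → Adjacent u u' → g u' = g u := by
    intro u u' hu hu' hadj
    rcases hadj.isDirEdge_or with h | h
    exacts [hg u u' ⟨h, c, hc, hu, hu'⟩, (hg u' u ⟨h, c, hc, hu', hu⟩).symm]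
  obtain ⟨a, b⟩ := c
  simp only [cornersOf, Set.mem_insert_iff, Set.mem_singleton_iff] at hw
  rcases hw with rfl | rfl | rfl | rfl
  · rfl
  · exact step (a, b) (a + 1, b) (by simp [cornersOf]) (by simp [cornersOf]) (by simp [Adjacent])
  · exact step (a, b) (a, b + 1) (by simp [cornersOf]) (by simp [cornersOf]) (by simp [Adjacent])
  · rw [step (a + 1, b) (a + 1, b + 1) (by simp [cornersOf]) (by simp [cornersOf])
      (by simp [Adjacent])]
    exact step (a, b) (a + 1, b) (by simp [cornersOf]) (by simp [cornersOf]) (by simp [Adjacent])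

theorem eq_of_forall_edgeInDomain (hfin : D.Finite) (hconn : IsPreconnected (regionOf D))
    (hg : ∀ p q, EdgeInDomain D p q → g q = g p) {u w : Vertex} (hu : IsVertexOf D u)
    (hw : IsVertexOf D w) : g u = g w := by
  obtain ⟨c₀, hc₀, huc₀⟩ := exists_mem_cornersOf_of_isVertexOf hu
  obtain ⟨c, hc, hwc⟩ := exists_mem_cornersOf_of_isVertexOf hw
  have hchain : ∀ c, Relation.ReflTransGen (SharesCornerIn D) c₀ c → c ∈ D ∧ g c = g c₀ := by
    intro c hr
    induction hr with
    | refl => exact ⟨hc₀, rfl⟩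
    | tail _ hlink ih =>
      obtain ⟨hc', x, hxb, hxc'⟩ := hlink
      exact ⟨hc', by rw [← apply_eq_of_mem_cornersOf hg hc' hxc',
        apply_eq_of_mem_cornersOf hg ih.1 hxb, ih.2]⟩
  rw [apply_eq_of_mem_cornersOf hg hc₀ huc₀, apply_eq_of_mem_cornersOf hg hc hwc,
    (hchain c (reflTransGen_of_isPreconnected hfin hconn hc₀ hc)).2]

end ConstantAlongEdges

theorem IsHeightFunction.unique {D : Set Cell} (hD : IsDomain D) {O : Vertex}
    (hO : IsVertexOf D O) {T : Set (Set Cell)} {h₁ h₂ : Vertex → ℤ}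
    (H₁ : IsHeightFunction D O T h₁) (H₂ : IsHeightFunction D O T h₂) {v : Vertex}
    (hv : IsVertexOf D v) : h₁ v = h₂ v := by
  have hdiff : ∀ p q, EdgeInDomain D p q → h₁ q - h₂ q = h₁ p - h₂ p := fun p q e => by
    by_cases hax : ∃ d ∈ T, IsCentralAxis d p q
    · rw [(H₁.2 p q e).1 hax, (H₂.2 p q e).1 hax]; ring
    · rw [(H₁.2 p q e).2 hax, (H₂.2 p q e).2 hax]; ring
  have := eq_of_forall_edgeInDomain hD.finite hD.isPreconnected hdiff hv hO
  rw [H₁.1, H₂.1] at this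
  omega

/-- The dominoes of the `2 × 2` square at `v` whose central axes are the directed edges ending
at `v` (for `inDominoes`) or starting at `v` (for `outDominoes`). -/
def inDominoes (v : Vertex) : Set (Set Cell) :=
  if Even (v.1 + v.2) then vDominoes v else hDominoes v

def outDominoes (v : Vertex) : Set (Set Cell) :=
  if Even (v.1 + v.2) then hDominoes v else vDominoes v

theorem IsCentralAxis.unique {d d' : Set Cell} {p q : Vertex} (h : IsCentralAxis d p q)
    (h' : IsCentralAxis d' p q) : d = d' := by
  obtain ⟨a, b, ⟨rfl, hab⟩ | ⟨rfl, hab⟩⟩ := h <;>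
    obtain ⟨a', b', ⟨rfl, hab'⟩ | ⟨rfl, hab'⟩⟩ := h' <;>
    have e := hab.symm.trans hab' <;>
    simp only [Set.pair_eq_pair_iff, Prod.mk.injEq] at e <;>
    first
    | (exfalso; omega)
    | (obtain ⟨rfl, rfl⟩ : a = a' ∧ b = b' := by omega
       rfl)

theorem IsDirEdge.ne {p q : Vertex} (h : IsDirEdge p q) : p ≠ q := by
  rintro rfl
  rcases h with ⟨-, h | h⟩ | ⟨-, h | h⟩ <;> simp only [Prod.ext_iff] at h <;> omega

theorem IsCentralAxis.eq_of_mem_inDominoes {v p q : Vertex} {d : Set Cell}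
    (hax : IsCentralAxis d p q) (hd : d ∈ inDominoes v) (hpq : IsDirEdge p q) : q = v := by
  obtain ⟨x, y⟩ := v; obtain ⟨p1, p2⟩ := p; obtain ⟨q1, q2⟩ := q
  obtain ⟨a, b, ⟨rfl, hab⟩ | ⟨rfl, hab⟩⟩ := hax <;>
  unfold inDominoes vDominoes hDominoes at hd <;>
  split_ifs at hd with hv <;>
  simp only [Set.mem_insert_iff, Set.mem_singleton_iff, Set.pair_eq_pair_iff,
    Prod.mk.injEq] at hd hab <;>
  unfold IsDirEdge at hpq <;>
  simp only [Int.even_iff, Prod.mk.injEq] at hv hpq ⊢ <;>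
  omega

theorem IsCentralAxis.eq_of_mem_outDominoes {v p q : Vertex} {d : Set Cell}
    (hax : IsCentralAxis d p q) (hd : d ∈ outDominoes v) (hpq : IsDirEdge p q) : p = v := by
  obtain ⟨x, y⟩ := v; obtain ⟨p1, p2⟩ := p; obtain ⟨q1, q2⟩ := q
  obtain ⟨a, b, ⟨rfl, hab⟩ | ⟨rfl, hab⟩⟩ := hax <;>
  unfold outDominoes vDominoes hDominoes at hd <;>
  split_ifs at hd with hv <;>
  simp only [Set.mem_insert_iff, Set.mem_singleton_iff, Set.pair_eq_pair_iff,
    Prod.mk.injEq] at hd hab <;>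
  unfold IsDirEdge at hpq <;>
  simp only [Int.even_iff, Prod.mk.injEq] at hv hpq ⊢ <;>
  omega

theorem exists_mem_inDominoes_isCentralAxis {p v : Vertex} (h : IsDirEdge p v) :
    ∃ d ∈ inDominoes v, IsCentralAxis d p v := by
  obtain ⟨x, y⟩ := p
  rcases h with ⟨hp, rfl | rfl⟩ | ⟨hp, rfl | rfl⟩ <;> [
    refine ⟨{(x - 1, y), (x, y)}, ?_, x - 1, y, Or.inl ⟨by simp, by simp⟩⟩;
    refine ⟨{(x - 1, y - 1), (x, y - 1)}, ?_, x - 1, y - 1,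
      Or.inl ⟨by simp, by simp [Set.pair_comm]⟩⟩;
    refine ⟨{(x, y - 1), (x, y)}, ?_, x, y - 1, Or.inr ⟨by simp, by simp⟩⟩;
    refine ⟨{(x - 1, y - 1), (x - 1, y)}, ?_, x - 1, y - 1,
      Or.inr ⟨by simp, by simp [Set.pair_comm]⟩⟩] <;>
  unfold inDominoes vDominoes hDominoes <;>
  split_ifs with hv <;>
  first
  | (simp only [Int.even_iff] at hp hv; omega)
  | simp

theorem exists_mem_outDominoes_isCentralAxis {v q : Vertex} (h : IsDirEdge v q) :
    ∃ d ∈ outDominoes v, IsCentralAxis d v q := by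
  obtain ⟨x, y⟩ := v
  rcases h with ⟨hv, rfl | rfl⟩ | ⟨hv, rfl | rfl⟩ <;> [
    refine ⟨{(x - 1, y), (x, y)}, ?_, x - 1, y, Or.inl ⟨by simp, by simp⟩⟩;
    refine ⟨{(x - 1, y - 1), (x, y - 1)}, ?_, x - 1, y - 1,
      Or.inl ⟨by simp, by simp [Set.pair_comm]⟩⟩;
    refine ⟨{(x, y - 1), (x, y)}, ?_, x, y - 1, Or.inr ⟨by simp, by simp⟩⟩;
    refine ⟨{(x - 1, y - 1), (x - 1, y)}, ?_, x - 1, y - 1,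
      Or.inr ⟨by simp, by simp [Set.pair_comm]⟩⟩] <;>
  simp [outDominoes, vDominoes, hDominoes, hv]

theorem ne_and_not_disjoint_of_mem_hDominoes_of_mem_vDominoes {v : Vertex} {d d' : Set Cell}
    (hd : d ∈ hDominoes v) (hd' : d' ∈ vDominoes v) : d ≠ d' ∧ ¬ Disjoint d d' := by
  obtain ⟨x, y⟩ := v
  simp only [hDominoes, vDominoes, Set.mem_insert_iff, Set.mem_singleton_iff] at hd hd'
  rcases hd with rfl | rfl <;> rcases hd' with rfl | rfl <;> simp [Set.pair_eq_pair_iff]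
  omega

theorem IsTiling.not_mem_of_mem_outDominoes {D : Set Cell} {T : Set (Set Cell)} {v : Vertex}
    {d : Set Cell} (hT : IsTiling D T) (hin : inDominoes v ⊆ T) (hd : d ∈ outDominoes v) :
    d ∉ T := by
  obtain ⟨d', hd', hne, hmeet⟩ : ∃ d' ∈ inDominoes v, d ≠ d' ∧ ¬ Disjoint d d' := by
    unfold inDominoes outDominoes at *
    split_ifs at * with hv
    · exact ⟨_, Set.mem_insert _ _,
        ne_and_not_disjoint_of_mem_hDominoes_of_mem_vDominoes hd (Set.mem_insert _ _)⟩
    · obtain ⟨hne, hmeet⟩ :=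
        ne_and_not_disjoint_of_mem_hDominoes_of_mem_vDominoes (Set.mem_insert _ _) hd
      exact ⟨_, Set.mem_insert _ _, hne.symm, fun h => hmeet h.symm⟩
  exact fun hdT => hmeet (hT.2.1 hdT (hin hd') hne)

theorem IsTiling.diff_union {D : Set Cell} {T S S' : Set (Set Cell)} (hT : IsTiling D T)
    (hS : S ⊆ T) (hS'dom : ∀ d ∈ S', IsDomino d) (hS'disj : S'.PairwiseDisjoint id)
    (hcover : ⋃₀ S' = ⋃₀ S) : IsTiling D (T \ S ∪ S') := by
  obtain ⟨hdom, hdisj, hunion⟩ := hT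
  have hrest : ∀ c ∈ T \ S, Disjoint c (⋃₀ S') := fun c hc => by
    rw [hcover, Set.disjoint_sUnion_right]
    exact fun s hs => hdisj hc.1 (hS hs) (ne_of_mem_of_not_mem hs hc.2).symm
  refine ⟨?_, ?_, ?_⟩
  · rintro d (hd | hd)
    exacts [hdom d hd.1, hS'dom d hd]
  · refine Set.pairwiseDisjoint_union.mpr ⟨hdisj.subset Set.sdiff_subset, hS'disj, ?_⟩
    exact fun c hc s hs _ => (hrest c hc).mono_right (Set.subset_sUnion_of_mem hs)
  · rw [Set.sUnion_union, hcover, ← Set.sUnion_union, Set.sdiff_union_of_subset hS, hunion]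

theorem isDomino_of_mem_outDominoes {v : Vertex} {d : Set Cell} (hd : d ∈ outDominoes v) :
    IsDomino d := by
  obtain ⟨x, y⟩ := v
  unfold outDominoes hDominoes vDominoes at hd
  split_ifs at hd <;> rcases hd with rfl | rfl
  exacts [⟨x - 1, y - 1, Or.inl (by simp)⟩, ⟨x - 1, y, Or.inl (by simp)⟩,
    ⟨x - 1, y - 1, Or.inr (by simp)⟩, ⟨x, y - 1, Or.inr (by simp)⟩]

theorem pairwiseDisjoint_outDominoes (v : Vertex) : (outDominoes v).PairwiseDisjoint id := by
  obtain ⟨x, y⟩ := v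
  unfold outDominoes hDominoes vDominoes
  split_ifs <;> refine Set.pairwise_pair.mpr fun _ => ⟨?_, ?_⟩ <;>
    simp [Function.onFun, Set.disjoint_left] <;> omega

theorem sUnion_outDominoes (v : Vertex) : ⋃₀ outDominoes v = ⋃₀ inDominoes v := by
  obtain ⟨x, y⟩ := v
  unfold outDominoes inDominoes hDominoes vDominoes
  split_ifs <;> ext <;> simp <;> tauto

section UpwardFlips

variable {D : Set Cell} {v : Vertex} {T T' : Set (Set Cell)}

theorem UpwardFlip.eq_diff_union (hflip : UpwardFlip D v T T') :
    inDominoes v ⊆ T ∧ T' = T \ inDominoes v ∪ outDominoes v := by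
  rcases hflip.2 with ⟨hv, hsub, rfl⟩ | ⟨hv, hsub, rfl⟩
  · simpa only [inDominoes, outDominoes, if_pos hv, and_true] using hsub
  · simpa only [inDominoes, outDominoes, if_neg hv, and_true] using hsub

theorem UpwardFlip.isTiling (hflip : UpwardFlip D v T T') (hT : IsTiling D T) :
    IsTiling D T' := by
  obtain ⟨hin, rfl⟩ := hflip.eq_diff_union
  exact hT.diff_union hin (fun _ => isDomino_of_mem_outDominoes)
    (pairwiseDisjoint_outDominoes v) (sUnion_outDominoes v)

theorem UpwardFlip.isCentralAxis_into (hflip : UpwardFlip D v T T') {p : Vertex}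
    (hp : IsDirEdge p v) :
    (∃ d ∈ T, IsCentralAxis d p v) ∧ ¬ ∃ d ∈ T', IsCentralAxis d p v := by
  obtain ⟨hin, rfl⟩ := hflip.eq_diff_union
  obtain ⟨d₀, hd₀, hax₀⟩ := exists_mem_inDominoes_isCentralAxis hp
  refine ⟨⟨d₀, hin hd₀, hax₀⟩, ?_⟩
  rintro ⟨d, ⟨-, hd⟩ | hd, hax⟩
  · exact hd (hax.unique hax₀ ▸ hd₀)
  · exact hp.ne (hax.eq_of_mem_outDominoes hd hp)

theorem UpwardFlip.isCentralAxis_out_of (hflip : UpwardFlip D v T T') (hT : IsTiling D T)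
    {q : Vertex} (hq : IsDirEdge v q) :
    (¬ ∃ d ∈ T, IsCentralAxis d v q) ∧ ∃ d ∈ T', IsCentralAxis d v q := by
  obtain ⟨hin, rfl⟩ := hflip.eq_diff_union
  obtain ⟨d₀, hd₀, hax₀⟩ := exists_mem_outDominoes_isCentralAxis hq
  refine ⟨?_, ⟨d₀, Or.inr hd₀, hax₀⟩⟩
  rintro ⟨d, hd, hax⟩
  exact hT.not_mem_of_mem_outDominoes hin hd₀ (hax.unique hax₀ ▸ hd)

theorem UpwardFlip.isCentralAxis_iff_of_ne (hflip : UpwardFlip D v T T') {p q : Vertex}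
    (hpq : IsDirEdge p q) (hp : p ≠ v) (hq : q ≠ v) :
    (∃ d ∈ T', IsCentralAxis d p q) ↔ ∃ d ∈ T, IsCentralAxis d p q := by
  obtain ⟨-, rfl⟩ := hflip.eq_diff_union
  constructor
  · rintro ⟨d, ⟨hd, -⟩ | hd, hax⟩
    exacts [⟨d, hd, hax⟩, absurd (hax.eq_of_mem_outDominoes hd hpq) hp]
  · rintro ⟨d, hd, hax⟩
    exact ⟨d, Or.inl ⟨hd, fun hd' => hq (hax.eq_of_mem_inDominoes hd' hpq)⟩, hax⟩

theorem UpwardFlip.isHeightFunction (hflip : UpwardFlip D v T T') (hT : IsTiling D T)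
    {O : Vertex} (hO : O ≠ v) {h : Vertex → ℤ} (hh : IsHeightFunction D O T h) :
    IsHeightFunction D O T' (fun w => h w + if w = v then 4 else 0) := by
  refine ⟨by simp [hO, hh.1], fun p q e => ?_⟩
  have hstep := hh.2 p q e
  by_cases hq : q = v
  · subst hq
    obtain ⟨hax, hnax'⟩ := hflip.isCentralAxis_into e.1
    simp only [if_neg e.1.ne, if_true, hnax', not_false_eq_true, true_implies,
      false_implies, true_and]
    linarith [hstep.1 hax]
  by_cases hp : p = v
  · subst hp
    obtain ⟨hnax, hax'⟩ := hflip.isCentralAxis_out_of hT e.1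
    simp only [if_neg hq, if_true, hax', not_true_eq_false, true_implies,
      false_implies, and_true]
    linarith [hstep.2 hnax]
  · simp only [if_neg hp, if_neg hq, add_zero, hflip.isCentralAxis_iff_of_ne e.1 hp hq]
    exact hstep

end UpwardFlips

theorem IsBoundaryVertexOf.ne {D : Set Cell} {O v : Vertex} (hO : IsBoundaryVertexOf D O)
    (hv : IsInteriorVertexOf D v) : O ≠ v :=
  fun h => hv.2 (h ▸ hO.2)

theorem isTiling_and_isHeightFunction_of_upwardFlips {D : Set Cell} {O : Vertex}
    (hO : IsBoundaryVertexOf D O) {f : ℕ → Set (Set Cell)} {vs : ℕ → Vertex}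
    {h₀ : Vertex → ℤ} (hf₀ : IsTiling D (f 0)) (hh₀ : IsHeightFunction D O (f 0) h₀) {n : ℕ}
    (hstep : ∀ i < n, UpwardFlip D (vs i) (f i) (f (i + 1))) :
    IsTiling D (f n) ∧
      IsHeightFunction D O (f n) (fun w => h₀ w + 4 * Nat.count (fun i => vs i = w) n) := by
  induction n with
  | zero => simpa using ⟨hf₀, hh₀⟩
  | succ n ih =>
    obtain ⟨hfn, hhn⟩ := ih fun i hi => hstep i (hi.trans n.lt_succ_self)
    have hflip := hstep n n.lt_succ_self
    refine ⟨hflip.isTiling hfn, ?_⟩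
    convert hflip.isHeightFunction hfn (hO.ne hflip.1) hhn using 2 with w
    rw [Nat.count_succ]
    by_cases hw : vs n = w
    · simp only [hw, if_true]
      push_cast
      ring
    · simp only [hw, if_false, Ne.symm hw, add_zero]

theorem normalized_height_counts_flips_general
    (D : Set Cell) (hD : IsDomain D)
    (O : Vertex) (hO : IsBoundaryVertexOf D O)
    (Tmin : Set (Set Cell))
    (hTmin : IsTiling D Tmin ∧
      ∀ T : Set (Set Cell), IsTiling D T → TilingLE D O Tmin T)
    (T : Set (Set Cell))
    (h hmin : Vertex → ℤ)
    (hh : IsHeightFunction D O T h) (hhmin : IsHeightFunction D O Tmin hmin)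
    (p : ℕ) (f : ℕ → Set (Set Cell)) (vs : ℕ → Vertex)
    (hf0 : f 0 = Tmin) (hfp : f p = T)
    (hstep : ∀ i < p, UpwardFlip D (vs i) (f i) (f (i + 1))) :
    ∀ v : Vertex, IsInteriorVertexOf D v →
      4 * ((((Finset.range p).filter (fun i => vs i = v)).card : ℤ)) =
        h v - hmin v := by
  intro v hv
  subst hf0 hfp
  have hflips := (isTiling_and_isHeightFunction_of_upwardFlips hO hTmin.1 hhmin hstep).2
  rw [hh.unique hD hO.1 hflips hv.1, Nat.count_eq_card_filter_range]
  ring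

/-- along any sequence of upward flips from the minimal tiling
to a tiling `T`, the number of flips performed at an interior vertex `v`
equals `(h_T(v) - h_{T_min}(v)) / 4`; in particular it does not depend on the
sequence. -/
theorem normalized_height_counts_flips
    (D : Set Cell) (hD : IsDomain D)
    (O : Vertex) (hO : IsBoundaryVertexOf D O)
    (Tmin : Set (Set Cell))
    (hTmin : IsTiling D Tmin ∧
      ∀ T : Set (Set Cell), IsTiling D T → TilingLE D O Tmin T)
    (T : Set (Set Cell)) (hT : IsTiling D T)
    (h hmin : Vertex → ℤ)
    (hh : IsHeightFunction D O T h) (hhmin : IsHeightFunction D O Tmin hmin)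
    (p : ℕ) (f : ℕ → Set (Set Cell)) (vs : ℕ → Vertex)
    (hf0 : f 0 = Tmin) (hfp : f p = T)
    (hstep : ∀ i < p, UpwardFlip D (vs i) (f i) (f (i + 1))) :
    ∀ v : Vertex, IsInteriorVertexOf D v →
      4 * ((((Finset.range p).filter (fun i => vs i = v)).card : ℤ)) =
        h v - hmin v :=
  normalized_height_counts_flips_general D hD O hO Tmin hTmin T h hmin hh hhmin p f vs hf0 hfp hstep

end DominoTiling
end
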